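/- Any two distinct points in a Hilbert geometry have a Hilbert midpoint: for a nonempty bounded open convex set K ⊂ ℝⁿ and x ≠ y in K, there exists a unique point m on the open segment from x to y with d_K(x,m) = d_K(m,y). -/

import Mathlib

open scoped Classical

/-- The Hilbert distance of a set `K ⊆ ℝⁿ` at `x, y`: parametrizing the line through
`x, y` as `t ↦ x + t•(y−x)` (so `x` at `t = 0`, `y` at `t = 1`), the boundary points
are `a` at `S = sInf {t | x + t•(y−x) ∈ K}` and `b` at `T = sSup {t | x + t•(y−x) ∈ K}`,
and `d_K(x,y) = (1/2)·log((|y−a|/|x−a|)·(|x−b|/|y−b|))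
             = (1/2)·log(((1−S)/(−S))·(T/(T−1)))`. -/
noncomputable def hilbertDist {n : ℕ} (K : Set (EuclideanSpace ℝ (Fin n)))
    (x y : EuclideanSpace ℝ (Fin n)) : ℝ :=
  if x = y then 0
  else
    (1 / 2) * Real.log
      (((1 - sInf {t : ℝ | x + t • (y - x) ∈ K}) / (0 - sInf {t : ℝ | x + t • (y - x) ∈ K})) *
        (sSup {t : ℝ | x + t • (y - x) ∈ K} / (sSup {t : ℝ | x + t • (y - x) ∈ K} - 1)))

/-!
On the line `t ↦ x + t • (y - x)` the set `K` occupies the parameters between `S = sInf` and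
`T = sSup` of its line section, with `S < 0 < 1 < T` since `K` is open. For `S < s < s' < T`
the cross ratio in `hilbertDist` is `((s' - S) / (T - s')) / ((s - S) / (T - s))`, so the
distance between the points with parameters `s` and `s'` is `(φ s' - φ s) / 2` for the
coordinate `φ t = log (t - S) - log (T - t)`, a continuous increasing function on `(S, T)`.
The midpoint condition for the point with parameter `s ∈ (0, 1)` therefore reads
`φ s = (φ 0 + φ 1) / 2`, which has exactly one solution by the intermediate value theorem
and strict monotonicity.
-/

open Set Bornology

def lineSection {E : Type*} [AddCommGroup E] [Module ℝ E] (K : Set E) (x v : E) : Set ℝ :=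
  {t | x + t • v ∈ K}

noncomputable def hilbertCoord (A : Set ℝ) (t : ℝ) : ℝ :=
  Real.log (t - sInf A) - Real.log (sSup A - t)

section Real

variable {A : Set ℝ}

theorem csInf_preimage_affine (hne : A.Nonempty) (hbdd : BddBelow A) (c : ℝ) {r : ℝ}
    (hr : 0 < r) : sInf ((fun t => c + r * t) ⁻¹' A) = (sInf A - c) / r := by
  let e : ℝ ≃o ℝ := (OrderIso.mulLeft₀ r hr).trans (OrderIso.addLeft c)
  have he : ⇑e = fun t => c + r * t := rfl
  rw [← he]
  refine IsGLB.csInf_eq ?_ (hne.preimage e.surjective)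
  rw [e.isGLB_preimage, he]
  beta_reduce
  rw [mul_div_cancel₀ _ hr.ne', add_sub_cancel]
  exact isGLB_csInf hne hbdd

theorem csSup_preimage_affine (hne : A.Nonempty) (hbdd : BddAbove A) (c : ℝ) {r : ℝ}
    (hr : 0 < r) : sSup ((fun t => c + r * t) ⁻¹' A) = (sSup A - c) / r := by
  let e : ℝ ≃o ℝ := (OrderIso.mulLeft₀ r hr).trans (OrderIso.addLeft c)
  have he : ⇑e = fun t => c + r * t := rfl
  rw [← he]
  refine IsLUB.csSup_eq ?_ (hne.preimage e.surjective)
  rw [e.isLUB_preimage, he]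
  beta_reduce
  rw [mul_div_cancel₀ _ hr.ne', add_sub_cancel]
  exact isLUB_csSup hne hbdd

theorem IsOpen.subset_Ioo_csInf_csSup (hA : IsOpen A) (hbdd : IsBounded A) :
    A ⊆ Ioo (sInf A) (sSup A) := by
  intro t ht
  obtain ⟨a, hat, ha⟩ := Filter.Eventually.exists_lt (hA.mem_nhds ht)
  obtain ⟨b, htb, hb⟩ := Filter.Eventually.exists_gt (hA.mem_nhds ht)
  exact ⟨(csInf_le hbdd.bddBelow ha).trans_lt hat, htb.trans_le (le_csSup hbdd.bddAbove hb)⟩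

theorem strictMonoOn_hilbertCoord : StrictMonoOn (hilbertCoord A) (Ioo (sInf A) (sSup A)) := by
  intro s hs t ht hst
  have h1 := Real.log_lt_log (sub_pos.2 hs.1) (sub_lt_sub_right hst (sInf A))
  have h2 := Real.log_lt_log (sub_pos.2 ht.2) (sub_lt_sub_left hst (sSup A))
  simp only [hilbertCoord]
  linarith

theorem continuousOn_hilbertCoord : ContinuousOn (hilbertCoord A) (Ioo (sInf A) (sSup A)) := by
  intro t ht
  have hS : t - sInf A ≠ 0 := (sub_pos.2 ht.1).ne'
  have hT : sSup A - t ≠ 0 := (sub_pos.2 ht.2).ne'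
  unfold hilbertCoord
  fun_prop (disch := assumption)

theorem existsUnique_mem_Ioo_eq_of_strictMonoOn {f : ℝ → ℝ} {a b c : ℝ} (hab : a ≤ b)
    (hcont : ContinuousOn f (Icc a b)) (hmono : StrictMonoOn f (Icc a b))
    (hc : c ∈ Ioo (f a) (f b)) : ∃! s, s ∈ Ioo a b ∧ f s = c := by
  obtain ⟨s, hs, rfl⟩ := intermediate_value_Ioo hab hcont hc
  exact ⟨s, ⟨hs, rfl⟩, fun t ⟨ht, hts⟩ =>
    hmono.injOn (Ioo_subset_Icc_self ht) (Ioo_subset_Icc_self hs) hts⟩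

end Real

section LineSection

variable {E : Type*} [NormedAddCommGroup E] [NormedSpace ℝ E] {K : Set E} {x v : E}

theorem IsOpen.lineSection (hK : IsOpen K) : IsOpen (lineSection K x v) :=
  hK.preimage (by fun_prop)

theorem Bornology.IsBounded.lineSection (hK : IsBounded K) (hv : v ≠ 0) :
    IsBounded (lineSection K x v) := by
  obtain ⟨R, hR⟩ := isBounded_iff_forall_norm_le.1 hK
  refine isBounded_iff_forall_norm_le.2 ⟨(R + ‖x‖) / ‖v‖, fun t ht => ?_⟩
  rw [le_div_iff₀ (norm_pos_iff.2 hv), ← norm_smul]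
  calc ‖t • v‖ = ‖(x + t • v) - x‖ := by rw [add_sub_cancel_left]
    _ ≤ ‖x + t • v‖ + ‖x‖ := norm_sub_le _ _
    _ ≤ R + ‖x‖ := by gcongr; exact hR _ ht

theorem lineSection_add_smul_sub (s s' : ℝ) :
    lineSection K (x + s • v) ((x + s' • v) - (x + s • v)) =
      (fun t => s + (s' - s) * t) ⁻¹' lineSection K x v := by
  ext t
  simp only [lineSection, mem_ofPred_eq, mem_preimage, add_sub_add_left_eq_sub, ← sub_smul,
    smul_smul, add_smul, add_assoc, mul_comm t]

end LineSection

section HilbertDist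

variable {n : ℕ} {K : Set (EuclideanSpace ℝ (Fin n))}

theorem hilbertDist_of_ne {x y : EuclideanSpace ℝ (Fin n)} (h : x ≠ y) :
    hilbertDist K x y = 1 / 2 * Real.log
      ((1 - sInf (lineSection K x (y - x))) / (0 - sInf (lineSection K x (y - x))) *
        (sSup (lineSection K x (y - x)) / (sSup (lineSection K x (y - x)) - 1))) :=
  if_neg h

theorem hilbertDist_add_smul (hKb : IsBounded K) {x v : EuclideanSpace ℝ (Fin n)} (hv : v ≠ 0)
    (hA : (lineSection K x v).Nonempty) {s s' : ℝ} (hSs : sInf (lineSection K x v) < s)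
    (hss' : s < s') (hs'T : s' < sSup (lineSection K x v)) :
    hilbertDist K (x + s • v) (x + s' • v) =
      (hilbertCoord (lineSection K x v) s' - hilbertCoord (lineSection K x v) s) / 2 := by
  have hAb : IsBounded (lineSection K x v) := hKb.lineSection hv
  have hne : x + s • v ≠ x + s' • v := fun h =>
    hss'.ne (smul_left_injective ℝ hv (add_left_cancel h))
  have hr : 0 < s' - s := sub_pos.2 hss'
  rw [hilbertDist_of_ne hne, lineSection_add_smul_sub, csInf_preimage_affine hA hAb.bddBelow _ hr,
    csSup_preimage_affine hA hAb.bddAbove _ hr]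
  simp only [hilbertCoord]
  set S := sInf (lineSection K x v)
  set T := sSup (lineSection K x v)
  have hsS : 0 < s - S := sub_pos.2 hSs
  have hTs' : 0 < T - s' := sub_pos.2 hs'T
  have hs'S : 0 < s' - S := by linarith
  have hTs : 0 < T - s := by linarith
  have harg : (1 - (S - s) / (s' - s)) / (0 - (S - s) / (s' - s)) *
      ((T - s) / (s' - s) / ((T - s) / (s' - s) - 1)) =
        (s' - S) * (T - s) / ((s - S) * (T - s')) := by
    rw [show 1 - (S - s) / (s' - s) = (s' - S) / (s' - s) by field_simp; ring,
      show 0 - (S - s) / (s' - s) = (s - S) / (s' - s) by ring,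
      show (T - s) / (s' - s) - 1 = (T - s') / (s' - s) by field_simp; ring,
      div_div_div_cancel_right₀ hr.ne', div_div_div_cancel_right₀ hr.ne', div_mul_div_comm]
  rw [harg, Real.log_div (mul_pos hs'S hTs).ne' (mul_pos hsS hTs').ne',
    Real.log_mul hs'S.ne' hTs.ne', Real.log_mul hsS.ne' hTs'.ne']
  ring

theorem hilbertDist_eq_iff_hilbertCoord_eq_midpoint (hKb : IsBounded K)
    {x y : EuclideanSpace ℝ (Fin n)} (hxy : x ≠ y) (hA : (lineSection K x (y - x)).Nonempty)
    (hS : sInf (lineSection K x (y - x)) < 0) (hT : 1 < sSup (lineSection K x (y - x)))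
    {s : ℝ} (hs : s ∈ Ioo 0 1) :
    hilbertDist K x (x + s • (y - x)) = hilbertDist K (x + s • (y - x)) y ↔
      hilbertCoord (lineSection K x (y - x)) s =
        (hilbertCoord (lineSection K x (y - x)) 0 +
          hilbertCoord (lineSection K x (y - x)) 1) / 2 := by
  have hv : y - x ≠ 0 := sub_ne_zero.2 hxy.symm
  have h0s := hilbertDist_add_smul hKb hv hA hS hs.1 (hs.2.trans hT)
  have hs1 := hilbertDist_add_smul hKb hv hA (hS.trans hs.1) hs.2 hT
  rw [zero_smul, add_zero] at h0s
  rw [one_smul, add_sub_cancel] at hs1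
  rw [h0s, hs1]
  constructor <;> intro h <;> linarith

end HilbertDist

theorem hilbert_midpoint_exists_unique_general {n : ℕ} (K : Set (EuclideanSpace ℝ (Fin n)))
    (hbd : Bornology.IsBounded K) (hop : IsOpen K)
    (x y : EuclideanSpace ℝ (Fin n)) (hx : x ∈ K) (hy : y ∈ K) (hxy : x ≠ y) :
    ∃! m : EuclideanSpace ℝ (Fin n),
      m ∈ openSegment ℝ x y ∧ hilbertDist K x m = hilbertDist K m y := by
  set A := lineSection K x (y - x)
  have h0 : (0 : ℝ) ∈ A := by simpa [A, lineSection] using hx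
  have h1 : (1 : ℝ) ∈ A := by simpa [A, lineSection] using hy
  have hsub : A ⊆ Ioo (sInf A) (sSup A) :=
    hop.lineSection.subset_Ioo_csInf_csSup (hbd.lineSection (sub_ne_zero.2 hxy.symm))
  have hIcc : Icc 0 1 ⊆ Ioo (sInf A) (sSup A) := Icc_subset_Ioo (hsub h0).1 (hsub h1).2
  have key := fun s (hs : s ∈ Ioo (0 : ℝ) 1) =>
    hilbertDist_eq_iff_hilbertCoord_eq_midpoint hbd hxy ⟨0, h0⟩ (hsub h0).1 (hsub h1).2 hs
  have hφ : hilbertCoord A 0 < hilbertCoord A 1 :=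
    strictMonoOn_hilbertCoord (hIcc (left_mem_Icc.2 zero_le_one))
      (hIcc (right_mem_Icc.2 zero_le_one)) zero_lt_one
  obtain ⟨s, ⟨hs, hφs⟩, huniq⟩ := existsUnique_mem_Ioo_eq_of_strictMonoOn zero_le_one
    (continuousOn_hilbertCoord.mono hIcc) (strictMonoOn_hilbertCoord.mono hIcc)
    (c := (hilbertCoord A 0 + hilbertCoord A 1) / 2) ⟨by linarith, by linarith⟩
  rw [openSegment_eq_image']
  refine ⟨x + s • (y - x), ⟨mem_image_of_mem _ hs, (key s hs).2 hφs⟩, ?_⟩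
  rintro _ ⟨⟨t, ht, rfl⟩, hd⟩
  rw [huniq t ⟨ht, (key t ht).1 hd⟩]

/-- Any two distinct points of a Hilbert geometry have a unique Hilbert
midpoint on the open segment joining them. -/
theorem hilbert_midpoint_exists_unique {n : ℕ} (K : Set (EuclideanSpace ℝ (Fin n)))
    (hne : K.Nonempty) (hbd : Bornology.IsBounded K) (hop : IsOpen K) (hcv : Convex ℝ K)
    (x y : EuclideanSpace ℝ (Fin n)) (hx : x ∈ K) (hy : y ∈ K) (hxy : x ≠ y) :
    ∃! m : EuclideanSpace ℝ (Fin n),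
      m ∈ openSegment ℝ x y ∧ hilbertDist K x m = hilbertDist K m y :=
  hilbert_midpoint_exists_unique_general K hbd hop x y hx hy hxy
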